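/- Let two disjoint strongly sign controllable components G₁ and G₂ (each a path state graph with an input node at a terminal node) be joined by two bridge edges (k₁,l₁) and (k₂,l₂) with k₁,k₂ ∈ V₁^S, l₁,l₂ ∈ V₂^S. If k₂ and l₂ are both in N(V_I) (each adjacent to an input node), then the merged graph is strongly sign controllable regardless of the positions of k₁ and l₁. -/

import Mathlib

open scoped Classical

/-- Dedicated node of `α` in `G`: not in `α`, exactly one neighbor in `α`. -/
def ded {V : Type} (G : SimpleGraph V) (α : Finset V) (v : V) : Prop :=
  v ∉ α ∧ (α.filter (G.Adj v)).card = 1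

/-- Two path state graphs `Fin n₁` and `Fin n₂`, each with one input node
attached at the state node `t₁` (resp. `t₂`), joined by the two bridge edges
`(k₁, l₁)` and `(k₂, l₂)`. -/
def twoPathsBridged (n₁ n₂ : ℕ) (t₁ k₁ k₂ : Fin n₁) (t₂ l₁ l₂ : Fin n₂) :
    SimpleGraph ((Fin n₁ ⊕ Fin n₂) ⊕ Fin 2) :=
  SimpleGraph.fromRel (fun x y =>
    match x, y with
    | Sum.inl (Sum.inl a), Sum.inl (Sum.inl b) => (a : ℕ) + 1 = (b : ℕ)
    | Sum.inl (Sum.inr a), Sum.inl (Sum.inr b) => (a : ℕ) + 1 = (b : ℕ)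
    | Sum.inl (Sum.inl a), Sum.inl (Sum.inr b) =>
        (a = k₁ ∧ b = l₁) ∨ (a = k₂ ∧ b = l₂)
    | Sum.inr u, Sum.inl (Sum.inl a) => u = 0 ∧ a = t₁
    | Sum.inr u, Sum.inl (Sum.inr b) => u = 1 ∧ b = t₂
    | _, _ => False)

/-! In a path whose input sits at an endpoint `t ∉ A`, the outer neighbour of the element of `A`
closest to `t` has exactly one neighbour in `A`. In the merged graph, such a candidate on the first
path stays dedicated unless it is `k₁` and `l₁ ∈ α` (the other bridge ends at `t₂ ∉ α`), and
symmetrically on the second path. Both candidates cannot fail: failure on the first side gives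
`k₁ ∉ α` and `l₁ ∈ α`, so the second path meets `α` and its candidate fails only if `k₁ ∈ α`. -/

open SimpleGraph

lemma ded_of_forall_adj_eq {V : Type} {G : SimpleGraph V} {α : Finset V} {v w : V}
    (hw : w ∈ α) (hv : v ∉ α) (hvw : G.Adj v w) (huniq : ∀ x ∈ α, G.Adj v x → x = w) :
    ded G α v := by
  refine ⟨hv, Finset.card_eq_one.mpr ⟨w, ?_⟩⟩
  ext x
  simp only [Finset.mem_filter, Finset.mem_singleton]
  exact ⟨fun hx => huniq x hx.1 hx.2, fun hx => hx ▸ ⟨hw, hvw⟩⟩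

lemma ded_map_iso {V W : Type} {G : SimpleGraph V} {G' : SimpleGraph W} (f : G ≃g G')
    {α : Finset V} {v : V} : ded G' (α.map f.toEquiv.toEmbedding) (f v) ↔ ded G α v := by
  unfold ded
  rw [Finset.filter_map, Finset.card_map]
  refine and_congr (not_congr (Finset.mem_map' f.toEquiv.toEmbedding)) ?_
  congr! 3 with x
  exact f.map_adj_iff

def pathGraphRevIso (n : ℕ) : pathGraph n ≃g pathGraph n :=
  ⟨Fin.revPerm, by intro a b; simp only [Fin.revPerm_apply, pathGraph_adj, Fin.val_rev]; omega⟩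

lemma exists_ded_pathGraph_of_forall_ne_zero {n : ℕ} {A : Finset (Fin n)} (hA : A.Nonempty)
    (h0 : ∀ a ∈ A, (a : ℕ) ≠ 0) : ∃ v, ded (pathGraph n) A v := by
  set a := A.min' hA
  have ha : a ∈ A := A.min'_mem hA
  have hmin : ∀ x ∈ A, (a : ℕ) ≤ x := fun x hx => A.min'_le x hx
  have ha0 := h0 a ha
  refine ⟨⟨a - 1, by omega⟩, ded_of_forall_adj_eq ha ?_ ?_ ?_⟩
  · intro hv
    have := hmin _ hv
    simp only at this
    omega
  · simp only [pathGraph_adj]; omega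
  · intro x hx hadj
    have := hmin x hx
    simp only [pathGraph_adj] at hadj
    exact Fin.ext (by omega)

lemma exists_ded_pathGraph {n : ℕ} {t : Fin n} (ht : (t : ℕ) = 0 ∨ (t : ℕ) = n - 1)
    {A : Finset (Fin n)} (hA : A.Nonempty) (htA : t ∉ A) : ∃ v, ded (pathGraph n) A v := by
  rcases ht with ht | ht
  · exact exists_ded_pathGraph_of_forall_ne_zero hA fun a ha h => htA (Fin.ext (ht ▸ h) ▸ ha)
  · let f := pathGraphRevIso n
    obtain ⟨v, hv⟩ := exists_ded_pathGraph_of_forall_ne_zero (hA.map (f := f.toEquiv.toEmbedding))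
      (by
        simp only [f, pathGraphRevIso, Finset.mem_map_equiv]
        intro a ha ha0
        rw [Fin.revPerm_symm, Fin.revPerm_apply] at ha
        exact htA ((Fin.ext (by rw [Fin.val_rev]; omega) : a.rev = t) ▸ ha))
    refine ⟨f v, ?_⟩
    have hAA : (A.map f.toEquiv.toEmbedding).map f.toEquiv.toEmbedding = A := by
      ext x; simp [f, pathGraphRevIso]
    rwa [← ded_map_iso f, hAA] at hv

section TwoPathsBridged

variable {n₁ n₂ : ℕ} {t₁ k₁ k₂ : Fin n₁} {t₂ l₁ l₂ : Fin n₂}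

open Sum

lemma twoPathsBridged_adj_inl_inl {a b : Fin n₁} :
    (twoPathsBridged n₁ n₂ t₁ k₁ k₂ t₂ l₁ l₂).Adj (inl (inl a)) (inl (inl b)) ↔
      (pathGraph n₁).Adj a b := by
  simp only [twoPathsBridged, fromRel_adj, pathGraph_adj, ne_eq, inl.injEq]
  exact ⟨And.right, fun h => ⟨by rintro rfl; omega, h⟩⟩

lemma twoPathsBridged_adj_inl_inr {a : Fin n₁} {b : Fin n₂} :
    (twoPathsBridged n₁ n₂ t₁ k₁ k₂ t₂ l₁ l₂).Adj (inl (inl a)) (inl (inr b)) ↔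
      (a = k₁ ∧ b = l₁) ∨ (a = k₂ ∧ b = l₂) := by
  simp [twoPathsBridged]

def twoPathsBridgedSwapIso :
    twoPathsBridged n₁ n₂ t₁ k₁ k₂ t₂ l₁ l₂ ≃g twoPathsBridged n₂ n₁ t₂ l₁ l₂ t₁ k₁ k₂ :=
  ⟨(Equiv.sumComm _ _).sumCongr (Equiv.swap 0 1), by
    rintro ((a | a) | u) ((b | b) | w) <;>
      simp [twoPathsBridged, Equiv.swap_apply_eq_iff] <;> tauto⟩

lemma ded_inl_of_ded_pathGraph {α : Finset ((Fin n₁ ⊕ Fin n₂) ⊕ Fin 2)} {v : Fin n₁}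
    (hinput : ∀ u, inr u ∉ α)
    (hbridge : ∀ b, (twoPathsBridged n₁ n₂ t₁ k₁ k₂ t₂ l₁ l₂).Adj (inl (inl v)) (inl (inr b)) →
      inl (inr b) ∉ α)
    (hv : ded (pathGraph n₁) (Finset.univ.filter fun a => inl (inl a) ∈ α) v) :
    ded (twoPathsBridged n₁ n₂ t₁ k₁ k₂ t₂ l₁ l₂) α (inl (inl v)) := by
  obtain ⟨hvα, hcard⟩ := hv
  refine ⟨by simpa using hvα, ?_⟩
  have hmap : α.filter ((twoPathsBridged n₁ n₂ t₁ k₁ k₂ t₂ l₁ l₂).Adj (inl (inl v))) =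
      ((Finset.univ.filter fun a => inl (inl a) ∈ α).filter ((pathGraph n₁).Adj v)).map
        ⟨inl ∘ inl, inl_injective.comp inl_injective⟩ := by
    ext ((a | b) | u)
    · simp [twoPathsBridged_adj_inl_inl]
    · simpa using fun hb hadj => hbridge b hadj hb
    · simpa using fun hu _ => hinput u hu
  rw [← hcard, hmap, Finset.card_map]

lemma exists_ded_or_of_inl_mem (ht₁ : (t₁ : ℕ) = 0 ∨ (t₁ : ℕ) = n₁ - 1) (hl₂ : l₂ = t₂)
    {α : Finset ((Fin n₁ ⊕ Fin n₂) ⊕ Fin 2)} (hinput : ∀ u, inr u ∉ α)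
    (ht₁α : inl (inl t₁) ∉ α) (ht₂α : inl (inr t₂) ∉ α) (hα : ∃ a, inl (inl a) ∈ α) :
    (∃ v, ded (twoPathsBridged n₁ n₂ t₁ k₁ k₂ t₂ l₁ l₂) α v) ∨
      (inl (inl k₁) ∉ α ∧ inl (inr l₁) ∈ α) := by
  obtain ⟨v, hv⟩ := exists_ded_pathGraph ht₁ (A := Finset.univ.filter fun a => inl (inl a) ∈ α)
    (by simpa [Finset.Nonempty] using hα) (by simpa using ht₁α)
  by_cases hblocked : v = k₁ ∧ inl (inr l₁) ∈ α
  · obtain ⟨rfl, hl₁⟩ := hblocked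
    exact Or.inr ⟨by simpa using hv.1, hl₁⟩
  refine Or.inl ⟨_, ded_inl_of_ded_pathGraph hinput (fun b hadj hb => ?_) hv⟩
  rcases twoPathsBridged_adj_inl_inr.mp hadj with ⟨rfl, rfl⟩ | ⟨-, rfl⟩
  · exact hblocked ⟨rfl, hb⟩
  · exact ht₂α (hl₂ ▸ hb)

lemma exists_ded_or_of_inr_mem (ht₂ : (t₂ : ℕ) = 0 ∨ (t₂ : ℕ) = n₂ - 1) (hk₂ : k₂ = t₁)
    {α : Finset ((Fin n₁ ⊕ Fin n₂) ⊕ Fin 2)} (hinput : ∀ u, inr u ∉ α)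
    (ht₁α : inl (inl t₁) ∉ α) (ht₂α : inl (inr t₂) ∉ α) (hα : ∃ b, inl (inr b) ∈ α) :
    (∃ v, ded (twoPathsBridged n₁ n₂ t₁ k₁ k₂ t₂ l₁ l₂) α v) ∨
      (inl (inr l₁) ∉ α ∧ inl (inl k₁) ∈ α) := by
  let f := twoPathsBridgedSwapIso (t₁ := t₁) (k₁ := k₁) (k₂ := k₂) (t₂ := t₂) (l₁ := l₁) (l₂ := l₂)
  have hmem : ∀ x, x ∈ α.map f.toEquiv.toEmbedding ↔ f.symm x ∈ α := fun x => Finset.mem_map_equiv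
  have hswap := exists_ded_or_of_inl_mem (k₁ := l₁) (k₂ := l₂) (l₁ := k₁) ht₂ hk₂
    (α := α.map f.toEquiv.toEmbedding)
    (fun u => by simpa [hmem, f, twoPathsBridgedSwapIso] using hinput _)
    (by simpa [hmem, f, twoPathsBridgedSwapIso] using ht₂α)
    (by simpa [hmem, f, twoPathsBridgedSwapIso] using ht₁α)
    (by simpa [hmem, f, twoPathsBridgedSwapIso] using hα)
  rcases hswap with ⟨v, hv⟩ | h
  · left
    refine ⟨f.symm v, (ded_map_iso f).mp ?_⟩
    simpa using hv
  · right
    simpa [hmem, f, twoPathsBridgedSwapIso] using h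

end TwoPathsBridged

theorem stmt8_general (n₁ n₂ : ℕ)
    (t₁ k₁ k₂ : Fin n₁) (t₂ l₁ l₂ : Fin n₂)
    -- the inputs are attached at terminal nodes (so each component is SSC)
    (ht₁ : (t₁ : ℕ) = 0 ∨ (t₁ : ℕ) = n₁ - 1)
    (ht₂ : (t₂ : ℕ) = 0 ∨ (t₂ : ℕ) = n₂ - 1)
    -- k₂ and l₂ are both in N(V_I)
    (hk₂ : k₂ = t₁) (hl₂ : l₂ = t₂) :
    -- the merged graph is strongly sign controllable,
    -- regardless of the positions of k₁ and l₁
    ∀ α ⊆ (((Finset.univ.image (Sum.inl ∘ Sum.inl) ∪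
             Finset.univ.image (Sum.inl ∘ Sum.inr)) :
              Finset ((Fin n₁ ⊕ Fin n₂) ⊕ Fin 2)) \
          {Sum.inl (Sum.inl t₁), Sum.inl (Sum.inr t₂)}),
      α.Nonempty →
        ∃ v, ded (twoPathsBridged n₁ n₂ t₁ k₁ k₂ t₂ l₁ l₂) α v := by
  intro α hsub hne
  have hinput : ∀ u, Sum.inr u ∉ α := fun u hu => by simpa using hsub hu
  have ht₁α : Sum.inl (Sum.inl t₁) ∉ α := fun h => by simpa using hsub h
  have ht₂α : Sum.inl (Sum.inr t₂) ∉ α := fun h => by simpa using hsub h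
  have hleft := exists_ded_or_of_inl_mem (k₁ := k₁) (k₂ := k₂) (l₁ := l₁) ht₁ hl₂ hinput ht₁α ht₂α
  have hright := exists_ded_or_of_inr_mem (k₁ := k₁) (l₁ := l₁) (l₂ := l₂) ht₂ hk₂ hinput ht₁α ht₂α
  by_contra hno
  obtain ⟨(a | b) | u, hx⟩ := hne
  · obtain ⟨-, hl₁⟩ := (hleft ⟨a, hx⟩).resolve_left hno
    exact ((hright ⟨l₁, hl₁⟩).resolve_left hno).1 hl₁
  · obtain ⟨-, hk₁⟩ := (hright ⟨b, hx⟩).resolve_left hno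
    exact ((hleft ⟨k₁, hk₁⟩).resolve_left hno).1 hk₁
  · exact hinput u hx

theorem stmt8 (n₁ n₂ : ℕ) (hn₁ : 1 ≤ n₁) (hn₂ : 1 ≤ n₂)
    (t₁ k₁ k₂ : Fin n₁) (t₂ l₁ l₂ : Fin n₂)
    -- the inputs are attached at terminal nodes (so each component is SSC)
    (ht₁ : (t₁ : ℕ) = 0 ∨ (t₁ : ℕ) = n₁ - 1)
    (ht₂ : (t₂ : ℕ) = 0 ∨ (t₂ : ℕ) = n₂ - 1)
    -- the two bridge edges are distinct
    (hbr : (k₁, l₁) ≠ (k₂, l₂))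
    -- k₂ and l₂ are both in N(V_I)
    (hk₂ : k₂ = t₁) (hl₂ : l₂ = t₂) :
    -- the merged graph is strongly sign controllable,
    -- regardless of the positions of k₁ and l₁
    ∀ α ⊆ (((Finset.univ.image (Sum.inl ∘ Sum.inl) ∪
             Finset.univ.image (Sum.inl ∘ Sum.inr)) :
              Finset ((Fin n₁ ⊕ Fin n₂) ⊕ Fin 2)) \
          {Sum.inl (Sum.inl t₁), Sum.inl (Sum.inr t₂)}),
      α.Nonempty →
        ∃ v, ded (twoPathsBridged n₁ n₂ t₁ k₁ k₂ t₂ l₁ l₂) α v :=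
  stmt8_general n₁ n₂ t₁ k₁ k₂ t₂ l₁ l₂ ht₁ ht₂ hk₂ hl₂
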